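/- arXiv:2305.00357 — 5 statements merged into one kernel-verified Lean document; each statement's English description precedes it below -/
import Mathlib

section
/- The polynomial x^5 + 5x^3 - 5x^2 + 5x + 3, with coefficients mapped into the field ℚ_5 of 5-adic numbers, is irreducible over ℚ_5. -/
open Polynomial

instance : Fact (Nat.Prime 5) := ⟨by norm_num⟩

private lemma mem_span5 (x : ℤ_[5]) (h : (5 : ℤ_[5]) ∣ x) :
    x ∈ Ideal.span {(5 : ℤ_[5])} := Ideal.mem_span_singleton.mpr h

private lemma eisenstein_r :
    Irreducible (X ^ 5 - 15 * X ^ 4 + 95 * X ^ 3 - 320 * X ^ 2 + 575 * X - 435 : ℤ_[5][X]) := by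
  set r : ℤ_[5][X] := X ^ 5 - 15 * X ^ 4 + 95 * X ^ 3 - 320 * X ^ 2 + 575 * X - 435 with hr
  have hmonic : r.Monic := by
    unfold r
    monicity!
  have hdeg : r.natDegree = 5 := by
    unfold r
    compute_degree!
  have heis : r.IsEisensteinAt (Ideal.span {(5 : ℤ_[5])}) := by
    constructor
    · rw [hmonic.leadingCoeff]
      intro h
      rw [Ideal.mem_span_singleton] at h
      have h5 : ‖(5 : ℤ_[5])‖ < 1 := by
        have h := PadicInt.norm_p (p := 5)
        push_cast at h
        rw [h]
        norm_num
      exact absurd (PadicInt.isUnit_iff.mp (isUnit_of_dvd_one h)) (ne_of_lt h5)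
    · intro n hn
      rw [hdeg] at hn
      interval_cases n
      · apply mem_span5
        unfold r
        simp only [coeff_add, coeff_sub, coeff_X_pow, coeff_ofNat_mul, coeff_ofNat_zero,
          coeff_ofNat_succ, coeff_X_zero, coeff_X_one, coeff_X]
        norm_num
        exact ⟨87, by norm_num⟩
      · apply mem_span5
        unfold r
        simp only [coeff_add, coeff_sub, coeff_X_pow, coeff_ofNat_mul, coeff_ofNat_zero,
          coeff_ofNat_succ, coeff_X_zero, coeff_X_one, coeff_X]
        norm_num
        exact ⟨115, by norm_num⟩
      · apply mem_span5
        unfold r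
        simp only [coeff_add, coeff_sub, coeff_X_pow, coeff_ofNat_mul, coeff_ofNat_zero,
          coeff_ofNat_succ, coeff_X_zero, coeff_X_one, coeff_X]
        norm_num
        exact ⟨64, by norm_num⟩
      · apply mem_span5
        unfold r
        simp only [coeff_add, coeff_sub, coeff_X_pow, coeff_ofNat_mul, coeff_ofNat_zero,
          coeff_ofNat_succ, coeff_X_zero, coeff_X_one, coeff_X]
        norm_num
        exact ⟨19, by norm_num⟩
      · apply mem_span5
        unfold r
        simp only [coeff_add, coeff_sub, coeff_X_pow, coeff_ofNat_mul, coeff_ofNat_zero,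
          coeff_ofNat_succ, coeff_X_zero, coeff_X_one, coeff_X]
        norm_num
        exact ⟨3, by norm_num⟩
    · rw [Ideal.span_singleton_pow, Ideal.mem_span_singleton]
      have h0 : r.coeff 0 = -435 := by
        unfold r
        simp only [coeff_add, coeff_sub, coeff_X_pow, coeff_ofNat_mul, coeff_natCast_ite]
        norm_num
      rw [h0]
      intro hdvd
      have hdvd' : (5 : ℤ_[5]) ^ 2 ∣ 435 := (dvd_neg).mp hdvd
      have h87 : (5 : ℤ_[5]) ∣ 87 := by
        have h435 : (435 : ℤ_[5]) = 5 * 87 := by norm_num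
        rw [h435, sq] at hdvd'
        exact (mul_dvd_mul_iff_left (by norm_num : (5:ℤ_[5]) ≠ 0)).mp hdvd'
      have h87' : ‖((87 : ℤ) : ℤ_[5])‖ < 1 := by
        rw [show ((87 : ℤ) : ℤ_[5]) = (87 : ℤ_[5]) by norm_num]
        rw [PadicInt.norm_lt_one_iff_dvd]
        exact_mod_cast h87
      rw [PadicInt.norm_int_lt_one_iff_dvd] at h87'
      norm_num at h87'
  have hprime : (Ideal.span {(5 : ℤ_[5])}).IsPrime := by
    have h := PadicInt.maximalIdeal_eq_span_p (p := 5)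
    rw [show ((5:ℕ) : ℤ_[5]) = (5 : ℤ_[5]) by norm_num] at h
    rw [← h]
    infer_instance
  exact heis.irreducible hprime hmonic.isPrimitive (by rw [hdeg]; norm_num)

private lemma irreducible_q_int :
    Irreducible (X ^ 5 + 5 * X ^ 3 - 5 * X ^ 2 + 5 * X + 3 : ℤ_[5][X]) := by
  have h := (MulEquiv.irreducible_iff (f := (algEquivAevalXAddC (3 : ℤ_[5])))).mpr eisenstein_r
  have heq : (algEquivAevalXAddC (3 : ℤ_[5]))
      (X ^ 5 - 15 * X ^ 4 + 95 * X ^ 3 - 320 * X ^ 2 + 575 * X - 435) =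
      (X ^ 5 + 5 * X ^ 3 - 5 * X ^ 2 + 5 * X + 3 : ℤ_[5][X]) := by
    simp only [algEquivAevalXAddC_apply, map_add, map_sub, map_mul, map_pow, map_ofNat, aeval_X,
      show ((C (3 : ℤ_[5])) : ℤ_[5][X]) = 3 by norm_cast]
    ring
  rwa [heq] at h

/-- The polynomial `x^5 + 5x^3 - 5x^2 + 5x + 3` is irreducible over `ℚ_5`. -/
theorem irreducible_quintic_one_over_Q5 :
    Irreducible (X ^ 5 + 5 * X ^ 3 - 5 * X ^ 2 + 5 * X + 3 : ℚ_[5][X]) := by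
  have hmonic : (X ^ 5 + 5 * X ^ 3 - 5 * X ^ 2 + 5 * X + 3 : ℤ_[5][X]).Monic := by
    monicity!
  have h := (hmonic.irreducible_iff_irreducible_map_fraction_map
    (K := ℚ_[5])).mp irreducible_q_int
  have hmap : ((X ^ 5 + 5 * X ^ 3 - 5 * X ^ 2 + 5 * X + 3 : ℤ_[5][X]).map
      (algebraMap ℤ_[5] ℚ_[5])) = (X ^ 5 + 5 * X ^ 3 - 5 * X ^ 2 + 5 * X + 3 : ℚ_[5][X]) := by
    simp [Polynomial.map_add, Polynomial.map_sub, Polynomial.map_mul, Polynomial.map_pow,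
      Polynomial.map_ofNat]
  rwa [hmap] at h
end

section
/- The polynomial x^5 + 10x^4 - 5x^3 + 145x^2 + 5x + 13, with coefficients mapped into the field ℚ_5 of 5-adic numbers, is irreducible over ℚ_5. -/
open Polynomial

/-- The shifted polynomial `g(x) = f(x-3)`, which is Eisenstein at 5 over `ℤ_[5]`. -/
noncomputable def Gaux : ℤ_[5][X] :=
  X ^ 5 - 5 * X ^ 4 - 35 * X ^ 3 + 460 * X ^ 2 - 1675 * X + 2005

lemma Gaux_monic : Gaux.Monic := by unfold Gaux; monicity!

lemma Gaux_deg : Gaux.natDegree = 5 := by unfold Gaux; compute_degree!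

lemma not_dvd_25 : ¬ ((5:ℤ_[5])^2 ∣ (2005 : ℤ_[5])) := by
  have h := (PadicInt.pow_p_dvd_int_iff (p := 5) 2 2005)
  rw [show ((2005:ℤ):ℤ_[5]) = (2005:ℤ_[5]) by push_cast; ring] at h
  intro hd
  have := h.mp hd
  norm_num at this

set_option maxHeartbeats 1000000 in
set_option synthInstance.maxHeartbeats 400000 in
lemma Gaux_irred : Irreducible Gaux := by
  refine Polynomial.IsEisensteinAt.irreducible (𝓟 := Ideal.span {(5:ℤ_[5])})
    ⟨?_, ?_, ?_⟩ ?_ Gaux_monic.isPrimitive ?_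
  · rw [Gaux_monic.leadingCoeff, Ideal.mem_span_singleton]
    exact fun h => PadicInt.irreducible_p.not_isUnit (isUnit_of_dvd_one h)
  · intro n hn
    rw [Gaux_deg] at hn
    rw [Ideal.mem_span_singleton]
    unfold Gaux
    have h5 : n = 0 ∨ n = 1 ∨ n = 2 ∨ n = 3 ∨ n = 4 := by omega
    rcases h5 with rfl | rfl | rfl | rfl | rfl
    · simp [coeff_X]; exact ⟨401, by norm_num⟩
    · simp [coeff_X]; exact ⟨335, by norm_num⟩
    · simp [coeff_X]; exact ⟨92, by norm_num⟩
    · simp [coeff_X]; try exact ⟨7, by norm_num⟩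
    · simp [coeff_X]
  · rw [Ideal.span_singleton_pow, Ideal.mem_span_singleton]
    unfold Gaux
    simpa [coeff_X] using not_dvd_25
  · rw [Ideal.span_singleton_prime (by norm_num)]
    exact PadicInt.irreducible_p.prime
  · rw [Gaux_deg]; norm_num

/-- The polynomial `x^5 + 10x^4 - 5x^3 + 145x^2 + 5x + 13` is irreducible over `ℚ_5`. -/
theorem irreducible_quintic_two_over_Q5 :
    Irreducible (X ^ 5 + 10 * X ^ 4 - 5 * X ^ 3 + 145 * X ^ 2 + 5 * X + 13 : ℚ_[5][X]) := by
  have h1 : Irreducible (Gaux.map (algebraMap ℤ_[5] ℚ_[5])) :=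
    (Gaux_monic.irreducible_iff_irreducible_map_fraction_map).mp Gaux_irred
  have h2 := h1.map (algEquivAevalXAddC (3 : ℚ_[5]))
  convert h2 using 1
  unfold Gaux
  simp only [algEquivAevalXAddC, algEquivOfCompEqX_apply, Polynomial.map_add,
    Polynomial.map_sub, Polynomial.map_mul, Polynomial.map_pow, Polynomial.map_ofNat,
    Polynomial.map_X, map_add, map_sub, map_mul, map_pow, map_ofNat, aeval_X]
  ring
end

section
/- The polynomial x^5 + 15x^4 - 10x^3 + 295x^2 + 5x + 18, with coefficients mapped into the field ℚ_5 of 5-adic numbers, is irreducible over ℚ_5. -/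
/-!
The Newton polygon of `f(x + 2)` (coefficient valuations `2, 3, 2, 2, 2, 0`) has the single
slope `2/5`, so every root `α` of `f` has `v(α - 2) = 2/5` and `η = (α - 2)^3 / 5` has
valuation `1/5`. Concretely, `η` is a root of a monic integer polynomial that is Eisenstein
at `5`, hence irreducible of degree `5` over `ℚ_5`. So every irreducible factor `c` of `f`
satisfies `5 ≤ [ℚ_5[X]/(c) : ℚ_5] = deg c`, and `f` is irreducible.
-/

open Polynomial

theorem Polynomial.irreducible_of_forall_irreducible_dvd_natDegree_le {F : Type*} [Field F]
    {f : F[X]} (hf : 0 < f.natDegree)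
    (h : ∀ c : F[X], Irreducible c → c ∣ f → f.natDegree ≤ c.natDegree) : Irreducible f := by
  have hf0 : f ≠ 0 := ne_zero_of_natDegree_gt hf
  obtain ⟨c, hc, d, rfl⟩ :=
    WfDvdMonoid.exists_irreducible_factor (not_isUnit_of_natDegree_pos f hf) hf0
  have hd0 : d ≠ 0 := right_ne_zero_of_mul hf0
  have hd : d.natDegree = 0 := by
    have := h c hc (dvd_mul_right c d)
    rw [natDegree_mul hc.ne_zero hd0] at this
    omega
  exact (associated_mul_unit_right c d (isUnit_iff_degree_eq_zero.mpr
    (by rw [degree_eq_natDegree hd0, hd]; rfl))).irreducible hc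

theorem Irreducible.natDegree_le_finrank_of_aeval_eq_zero {F K : Type*} [Field F] [Ring K]
    [Nontrivial K] [Algebra F K] [Module.Finite F K] {q : F[X]} (hq : Irreducible q) {x : K}
    (hx : aeval x q = 0) : q.natDegree ≤ Module.finrank F K := by
  have := minpoly.natDegree_le (A := F) x
  rwa [← minpoly.eq_of_irreducible hq hx,
    natDegree_mul_C (inv_ne_zero (leadingCoeff_ne_zero.mpr hq.ne_zero))] at this

theorem AdjoinRoot.natDegree_le_of_aeval_eq_zero {F : Type*} [Field F] {c q : F[X]}
    (hc : Irreducible c) (hq : Irreducible q) {x : AdjoinRoot c} (hx : aeval x q = 0) :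
    q.natDegree ≤ c.natDegree := by
  have := Fact.mk hc
  have := (AdjoinRoot.powerBasis hc.ne_zero).finite
  simpa [(AdjoinRoot.powerBasis hc.ne_zero).finrank] using
    hq.natDegree_le_finrank_of_aeval_eq_zero hx

theorem PadicInt.intCast_mem_span_pow_iff {p : ℕ} [Fact p.Prime] (k : ℤ) (n : ℕ) :
    (k : ℤ_[p]) ∈ Ideal.span {(p : ℤ_[p]) ^ n} ↔ (p : ℤ) ^ n ∣ k := by
  rw [← norm_le_pow_iff_mem_span_pow, norm_int_le_pow_iff_dvd]

theorem Polynomial.IsEisensteinAt.map_padicInt {p : ℕ} [Fact p.Prime] {f : ℤ[X]}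
    (hf : f.IsEisensteinAt (Ideal.span {(p : ℤ)})) :
    (f.map (Int.castRingHom ℤ_[p])).IsEisensteinAt (Ideal.span {(p : ℤ_[p])}) := by
  have hmem (k : ℤ) : (k : ℤ_[p]) ∈ Ideal.span {(p : ℤ_[p])} ↔ k ∈ Ideal.span {(p : ℤ)} := by
    simpa [Ideal.mem_span_singleton] using PadicInt.intCast_mem_span_pow_iff (p := p) k 1
  have hlc : (f.leadingCoeff : ℤ_[p]) ≠ 0 := fun h0 =>
    hf.leading ((hmem _).mp (h0 ▸ Submodule.zero_mem _))
  refine ⟨?_, fun hn => ?_, ?_⟩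
  · rw [leadingCoeff_map_of_leadingCoeff_ne_zero _ hlc, eq_intCast, hmem]
    exact hf.leading
  · rw [natDegree_map_of_leadingCoeff_ne_zero _ hlc] at hn
    rw [coeff_map, eq_intCast, hmem]
    exact hf.mem hn
  · rw [coeff_map, eq_intCast, Ideal.span_singleton_pow, PadicInt.intCast_mem_span_pow_iff,
      ← Ideal.mem_span_singleton, ← Ideal.span_singleton_pow]
    exact hf.notMem

theorem Polynomial.IsEisensteinAt.irreducible_map_padic {p : ℕ} [Fact p.Prime] {f : ℤ[X]}
    (hf : f.IsEisensteinAt (Ideal.span {(p : ℤ)})) (hd : 0 < f.natDegree) :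
    Irreducible (f.map (Int.castRingHom ℚ_[p])) := by
  set g := f.map (Int.castRingHom ℤ_[p])
  have hg := hf.map_padicInt
  have hlc : IsUnit g.leadingCoeff := IsLocalRing.notMem_maximalIdeal.mp
    (PadicInt.maximalIdeal_eq_span_p (p := p) ▸ hg.leading)
  have hprim : g.IsPrimitive := isPrimitive_iff_isUnit_of_C_dvd.mpr fun r hr =>
    isUnit_of_dvd_unit ((C_dvd_iff_dvd_coeff r g).mp hr g.natDegree) hlc
  have hirr : Irreducible g := hg.irreducible
    ((Ideal.span_singleton_prime (NeZero.ne _)).mpr PadicInt.prime_p) hprim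
    (by rwa [natDegree_map_eq_of_injective (RingHom.injective_int _)])
  have hfg : f.map (Int.castRingHom ℚ_[p]) = g.map (algebraMap ℤ_[p] ℚ_[p]) := by
    rw [map_map]; congr 1
  rw [hfg]
  exact hprim.irreducible_iff_irreducible_map_fraction_map.mp hirr

/-- The characteristic polynomial of `(α - 2)^3 / 5` over `ℚ_5`, for `α` a root of the
quintic. -/
noncomputable def uniformizerPoly : ℤ[X] :=
  X ^ 5 + 1280 * X ^ 4 - 25650 * X ^ 3 + 230400 * X ^ 2 + 905825 * X + 878080

theorem uniformizerPoly_natDegree : uniformizerPoly.natDegree = 5 := by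
  unfold uniformizerPoly; compute_degree!

theorem uniformizerPoly_isEisensteinAt :
    uniformizerPoly.IsEisensteinAt (Ideal.span {(5 : ℤ)}) := by
  refine ⟨?_, fun {n} hn => ?_, ?_⟩
  · rw [show uniformizerPoly.leadingCoeff = 1 by unfold uniformizerPoly; monicity!,
      Ideal.mem_span_singleton]
    decide
  · rw [uniformizerPoly_natDegree] at hn
    rw [Ideal.mem_span_singleton]
    interval_cases n <;> simp [uniformizerPoly, coeff_X]
  · rw [Ideal.span_singleton_pow, Ideal.mem_span_singleton]
    simp [uniformizerPoly]

theorem aeval_uniformizerPoly {K : Type*} [Field K] (h5 : (5 : K) ≠ 0) {α : K}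
    (hα : α ^ 5 + 15 * α ^ 4 - 10 * α ^ 3 + 295 * α ^ 2 + 5 * α + 18 = 0) :
    aeval ((α - 2) ^ 3 / 5) uniformizerPoly = 0 := by
  simp only [uniformizerPoly, map_add, map_sub, map_mul, map_pow, aeval_X, map_ofNat]
  field_simp
  linear_combination (22920924 - 26944320 * α + 15264595 * α ^ 2 - 5932835 * α ^ 3
    + 1949115 * α ^ 4 - 542264 * α ^ 5 + 110960 * α ^ 6 - 14560 * α ^ 7 + 1105 * α ^ 8
    - 45 * α ^ 9 + α ^ 10) * hα

/-- The polynomial `x^5 + 15x^4 - 10x^3 + 295x^2 + 5x + 18` is irreducible over `ℚ_5`. -/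
theorem irreducible_quintic_three_over_Q5 :
    Irreducible (X ^ 5 + 15 * X ^ 4 - 10 * X ^ 3 + 295 * X ^ 2 + 5 * X + 18 : ℚ_[5][X]) := by
  set f : ℚ_[5][X] := X ^ 5 + 15 * X ^ 4 - 10 * X ^ 3 + 295 * X ^ 2 + 5 * X + 18
  have hf : f.natDegree = 5 := by simp only [f]; compute_degree!
  refine irreducible_of_forall_irreducible_dvd_natDegree_le (by omega) fun c hc hcf => ?_
  have := Fact.mk hc
  have : CharZero (AdjoinRoot c) :=
    charZero_of_injective_algebraMap (algebraMap ℚ_[5] _).injective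
  have hα : aeval (AdjoinRoot.root c) f = 0 := by
    obtain ⟨d, hd⟩ := hcf
    rw [hd, map_mul, AdjoinRoot.aeval_eq, AdjoinRoot.mk_self, zero_mul]
  simp only [f, map_add, map_sub, map_mul, map_pow, aeval_X, map_ofNat] at hα
  have hη := aeval_uniformizerPoly (by norm_num) hα
  rw [← aeval_map_algebraMap ℚ_[5]] at hη
  have hirr := uniformizerPoly_isEisensteinAt.irreducible_map_padic
    (by rw [uniformizerPoly_natDegree]; norm_num)
  have hle := AdjoinRoot.natDegree_le_of_aeval_eq_zero hc hirr hη
  rw [natDegree_map_eq_of_injective (RingHom.injective_int _), uniformizerPoly_natDegree] at hle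
  rwa [hf]
end

section
/- The polynomial x^4 - 3x^2 + 18, regarded as a polynomial over the field ℚ_3 of 3-adic numbers, is irreducible, and its Galois group over ℚ_3 is cyclic of order 4. -/
/-!
Write the quartic as `X⁴ + aX² + b` with `a = -3`, `b = 18`. Then `a² - 4b = 3²·(-7)` and
`b = 3²·2` are non-squares in `ℚ₃` (as `-7` and `2` are non-squares mod 3), while
`b(a² - 4b) = 9²·(-14)` is a square by Hensel's lemma. A linear factor `X - x` would give
`(2x² + a)² = a² - 4b`, and a factorisation `(X² + cX + d)(X² - cX + g)` forces `c(g - d) = 0`,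
hence `(d - g)² = a² - 4b` or `d² = b`; so the quartic is irreducible. In `L = ℚ₃[X]/(f)` with
root `α`, a square root `s` of `b(a² - 4b)` gives the root `β = s / ((2α² + a)α)`, and the
automorphism `α ↦ β` sends `β` to `-α`. It has order 4, so `|Aut L| ≥ 4 = [L : ℚ₃]`: `L` is Galois,
hence the splitting field, with cyclic group of order 4.
-/

open Polynomial

lemma sq_two_mul_sq_add_eq_discr {R : Type*} [CommRing R] {a b x : R}
    (hx : x ^ 4 + a * x ^ 2 + b = 0) : (2 * x ^ 2 + a) ^ 2 = a ^ 2 - 4 * b := by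
  linear_combination 4 * hx

namespace Polynomial

lemma Monic.eq_X_sq_add_C_mul_X_add_C {R : Type*} [CommSemiring R] {p : R[X]}
    (hp : p.Monic) (h : p.natDegree = 2) : p = X ^ 2 + C (p.coeff 1) * X + C (p.coeff 0) := by
  have h2 : p.coeff 2 = 1 := h ▸ hp.coeff_natDegree
  conv_lhs => rw [p.as_sum_range_C_mul_X_pow, h]
  simp only [Finset.sum_range_succ, Finset.range_one, Finset.sum_singleton, pow_zero, mul_one,
    pow_one, h2, map_one, one_mul]
  ring

variable {K : Type*} [Field K]

noncomputable def biquadratic (a b : K) : K[X] := X ^ 4 + C a * X ^ 2 + C b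

variable (a b : K)

lemma natDegree_biquadratic : (biquadratic a b).natDegree = 4 := by
  unfold biquadratic; compute_degree!

lemma monic_biquadratic : (biquadratic a b).Monic := by
  unfold biquadratic; monicity!

lemma aeval_biquadratic {L : Type*} [CommRing L] [Algebra K L] (x : L) :
    aeval x (biquadratic a b) = x ^ 4 + algebraMap K L a * x ^ 2 + algebraMap K L b := by
  simp [biquadratic]

variable {a b}

lemma isSquare_discr_of_isRoot_biquadratic {x : K} (hx : (biquadratic a b).IsRoot x) :
    IsSquare (a ^ 2 - 4 * b) := by
  refine ⟨2 * x ^ 2 + a, ?_⟩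
  rw [← sq, sq_two_mul_sq_add_eq_discr]
  simpa [biquadratic] using hx

lemma isSquare_of_biquadratic_eq_mul {c d e g : K}
    (h : biquadratic a b = (X ^ 2 + C c * X + C d) * (X ^ 2 + C e * X + C g)) :
    IsSquare (a ^ 2 - 4 * b) ∨ IsSquare b := by
  have h' : X ^ 4 + C 0 * X ^ 3 + C a * X ^ 2 + C 0 * X + C b =
      X ^ 4 + C (c + e) * X ^ 3 + C (d + g + c * e) * X ^ 2 + C (c * g + d * e) * X
        + C (d * g) := by
    rw [C_0, zero_mul, zero_mul, add_zero, add_zero, ← biquadratic, h]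
    simp only [C_add, C_mul]
    ring
  have coeff_eq (n : ℕ) := congrArg (coeff · n) h'
  have h3 := coeff_eq 3
  have h2 := coeff_eq 2
  have h1 := coeff_eq 1
  have h0 := coeff_eq 0
  simp only [coeff_add, coeff_C_mul, coeff_X_pow, coeff_C, coeff_X] at h3 h2 h1 h0
  norm_num at h3 h2 h1 h0
  have hcgd : c * (g - d) = 0 := by linear_combination -h1 + d * h3
  rcases mul_eq_zero.mp hcgd with hc | hgd
  · left
    exact ⟨d - g, by rw [h2, h0, hc]; ring⟩
  · right
    exact ⟨d, by rw [h0, sub_eq_zero.mp hgd]⟩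

theorem irreducible_biquadratic (hD : ¬IsSquare (a ^ 2 - 4 * b)) (hb : ¬IsSquare b) :
    Irreducible (biquadratic a b) := by
  rw [(monic_biquadratic a b).irreducible_iff_natDegree', natDegree_biquadratic]
  refine ⟨fun h => by simpa [h] using natDegree_biquadratic a b, fun f g hf hg hfg hdeg => ?_⟩
  have hg12 : g.natDegree = 1 ∨ g.natDegree = 2 := by
    simp only [Finset.mem_Ioc] at hdeg; omega
  rcases hg12 with hg1 | hg2
  · have hroot : (biquadratic a b).IsRoot (-g.coeff 0) := by
      rw [← hfg, hg.eq_X_add_C hg1]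
      simp
    exact hD (isSquare_discr_of_isRoot_biquadratic hroot)
  · have hf2 : f.natDegree = 2 := by
      have := congrArg natDegree hfg
      rw [hf.natDegree_mul hg, natDegree_biquadratic] at this
      omega
    rw [hf.eq_X_sq_add_C_mul_X_add_C hf2, hg.eq_X_sq_add_C_mul_X_add_C hg2] at hfg
    exact (isSquare_of_biquadratic_eq_mul hfg.symm).elim hD hb

lemma const_ne_zero_of_irreducible_biquadratic (hf : Irreducible (biquadratic a b)) : b ≠ 0 :=
  fun hb => hf.not_isRoot_of_natDegree_ne_one (by rw [natDegree_biquadratic]; norm_num)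
    (x := 0) (by simp [biquadratic, hb])

lemma discr_ne_zero_of_irreducible_biquadratic (h2 : (2 : K) ≠ 0)
    (hf : Irreducible (biquadratic a b)) : a ^ 2 - 4 * b ≠ 0 := by
  intro hD
  have hb : b = (a / 2) ^ 2 := by field_simp; linear_combination -hD
  refine hf.not_isSquare ⟨X ^ 2 + C (a / 2), ?_⟩
  rw [biquadratic, hb, C_pow, show C a = 2 * C (a / 2) by rw [← C_ofNat, ← C_mul]; field_simp]
  ring

section CycleRoot

variable {L : Type*} [Field L] {a b s x : L}

/-- If `x` and `y` are roots of `X⁴ + aX² + b` with `y² = -a - x²`, then `(xy)² = b` and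
`(2x² + a)² = a² - 4b`; for `s² = b(a² - 4b)` this singles out `y = s / ((2x² + a)x)`. -/
def cycleRoot (a s x : L) : L := s / ((2 * x ^ 2 + a) * x)

lemma ne_zero_of_biquadratic_eq_zero (hb : b ≠ 0) (hx : x ^ 4 + a * x ^ 2 + b = 0) : x ≠ 0 := by
  rintro rfl
  exact hb (by simpa using hx)

lemma two_mul_sq_add_ne_zero (hD : a ^ 2 - 4 * b ≠ 0) (hx : x ^ 4 + a * x ^ 2 + b = 0) :
    2 * x ^ 2 + a ≠ 0 := by
  rw [← pow_ne_zero_iff two_ne_zero, sq_two_mul_sq_add_eq_discr hx]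
  exact hD

variable (hb : b ≠ 0) (hD : a ^ 2 - 4 * b ≠ 0) (hs : s ^ 2 = b * (a ^ 2 - 4 * b))
  (hx : x ^ 4 + a * x ^ 2 + b = 0)
include hb hD hs hx

lemma cycleRoot_sq : cycleRoot a s x ^ 2 = b / x ^ 2 := by
  have := ne_zero_of_biquadratic_eq_zero hb hx
  have := two_mul_sq_add_ne_zero hD hx
  rw [cycleRoot, div_pow, hs, mul_pow, ← sq_two_mul_sq_add_eq_discr hx]
  field_simp

lemma cycleRoot_isRoot : cycleRoot a s x ^ 4 + a * cycleRoot a s x ^ 2 + b = 0 := by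
  have := ne_zero_of_biquadratic_eq_zero hb hx
  rw [show cycleRoot a s x ^ 4 = (cycleRoot a s x ^ 2) ^ 2 by ring, cycleRoot_sq hb hD hs hx]
  field_simp
  linear_combination b * hx

lemma cycleRoot_cycleRoot : cycleRoot a s (cycleRoot a s x) = -x := by
  have := ne_zero_of_biquadratic_eq_zero hb hx
  have := two_mul_sq_add_ne_zero hD hx
  have hs0 : s ≠ 0 := by rintro rfl; exact mul_ne_zero hb hD (by simpa using hs.symm)
  have hy : 2 * cycleRoot a s x ^ 2 + a = -(2 * x ^ 2 + a) := by
    rw [cycleRoot_sq hb hD hs hx]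
    field_simp
    linear_combination 2 * hx
  change s / ((2 * cycleRoot a s x ^ 2 + a) * cycleRoot a s x) = -x
  rw [hy, cycleRoot]
  field_simp

end CycleRoot

end Polynomial

namespace AdjoinRoot

variable {K : Type*} [Field K] {f : K[X]} [Fact (Irreducible f)]

instance : FiniteDimensional K (AdjoinRoot f) :=
  (powerBasis (Fact.out : Irreducible f).ne_zero).finite

lemma exists_algEquiv_root_eq {y : AdjoinRoot f} (hy : aeval y f = 0) :
    ∃ σ : AdjoinRoot f ≃ₐ[K] AdjoinRoot f, σ (root f) = y := by
  let φ := liftAlgHom f (Algebra.ofId K _) y hy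
  exact ⟨.ofBijective φ (Algebra.IsAlgebraic.algHom_bijective φ), liftAlgHom_root f _ y hy⟩

lemma isSplittingField_of_normal [Normal K (AdjoinRoot f)] :
    IsSplittingField K (AdjoinRoot f) f := by
  have hf : f ≠ 0 := (Fact.out : Irreducible f).ne_zero
  constructor
  · refine (Normal.splits inferInstance (root f)).of_dvd ?_ (Polynomial.map_dvd _ ?_)
    · exact Polynomial.map_ne_zero (minpoly.ne_zero (isIntegral_root hf))
    · rw [minpoly_root hf]
      exact dvd_mul_right _ _
  · rw [eq_top_iff, ← adjoinRoot_eq_top]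
    refine Algebra.adjoin_mono (Set.singleton_subset_iff.mpr ?_)
    rw [mem_rootSet_of_ne hf, aeval_eq, mk_self]

end AdjoinRoot

namespace Polynomial

variable {K : Type*} [Field K] {a b : K}

theorem exists_orderOf_eq_four_of_biquadratic (h2 : (2 : K) ≠ 0)
    [Fact (Irreducible (biquadratic a b))]
    (hs : IsSquare (b * (a ^ 2 - 4 * b))) :
    ∃ σ : AdjoinRoot (biquadratic a b) ≃ₐ[K] AdjoinRoot (biquadratic a b),
      orderOf σ = 4 := by
  have hf : Irreducible (biquadratic a b) := Fact.out
  obtain ⟨r, hr⟩ := hs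
  set α := AdjoinRoot.root (biquadratic a b)
  let ι := algebraMap K (AdjoinRoot (biquadratic a b))
  have hα : α ^ 4 + ι a * α ^ 2 + ι b = 0 := by
    rw [← aeval_biquadratic, AdjoinRoot.aeval_eq, AdjoinRoot.mk_self]
  have hb : ι b ≠ 0 := (_root_.map_ne_zero ι).mpr (const_ne_zero_of_irreducible_biquadratic hf)
  have hD : ι a ^ 2 - 4 * ι b ≠ 0 := by
    simpa only [map_sub, map_pow, map_mul, map_ofNat] using
      (_root_.map_ne_zero ι).mpr (discr_ne_zero_of_irreducible_biquadratic h2 hf)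
  have hs : ι r ^ 2 = ι b * (ι a ^ 2 - 4 * ι b) := by
    rw [sq, ← map_mul, ← hr]
    simp only [map_mul, map_sub, map_pow, map_ofNat]
  obtain ⟨σ, hσ⟩ := AdjoinRoot.exists_algEquiv_root_eq (y := cycleRoot (ι a) (ι r) α) (by
    rw [aeval_biquadratic]; exact cycleRoot_isRoot hb hD hs hα)
  have hσ_cycleRoot (x) : σ (cycleRoot (ι a) (ι r) x) = cycleRoot (ι a) (ι r) (σ x) := by
    simp only [cycleRoot, ι, map_div₀, map_mul, map_add, map_pow, map_ofNat, AlgEquiv.commutes]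
  have hσ2 : (σ ^ 2) α = -α := by
    rw [sq, AlgEquiv.mul_apply, hσ, hσ_cycleRoot, hσ, cycleRoot_cycleRoot hb hD hs hα]
  refine ⟨σ, orderOf_eq_prime_pow (p := 2) (n := 1) ?_ ?_⟩
  · intro h
    have h2α : 2 * α = 0 := by
      have := congrArg (· α) h
      simp only [pow_one, hσ2, AlgEquiv.one_apply] at this
      linear_combination -this
    have h2L : (2 : AdjoinRoot (biquadratic a b)) ≠ 0 := by
      simpa only [map_ofNat] using (_root_.map_ne_zero ι).mpr h2
    exact ne_zero_of_biquadratic_eq_zero hb hα ((mul_eq_zero.mp h2α).resolve_left h2L)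
  · refine AlgEquiv.coe_toAlgHom_injective (AdjoinRoot.algHom_ext ?_)
    change (σ ^ (2 * 2)) α = α
    rw [pow_mul, sq (σ ^ 2), AlgEquiv.mul_apply, hσ2, map_neg, hσ2, neg_neg]

theorem isCyclic_gal_biquadratic_and_card_eq_four (h2 : (2 : K) ≠ 0)
    (hf : Irreducible (biquadratic a b))
    (hs : IsSquare (b * (a ^ 2 - 4 * b))) :
    IsCyclic (biquadratic a b).Gal ∧ Nat.card (biquadratic a b).Gal = 4 := by
  have := Fact.mk hf
  let L := AdjoinRoot (biquadratic a b)
  obtain ⟨σ, hσ⟩ := exists_orderOf_eq_four_of_biquadratic h2 hs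
  have hrank : Module.finrank K L = 4 := by
    rw [(AdjoinRoot.powerBasis hf.ne_zero).finrank, AdjoinRoot.powerBasis_dim,
      natDegree_biquadratic]
  have hcard : Nat.card Gal(L/K) = 4 := by
    refine le_antisymm ?_ (hσ ▸ orderOf_le_card)
    rw [Nat.card_eq_fintype_card, ← hrank]
    exact AlgEquiv.card_le
  have : IsGalois K L := .of_card_aut_eq_finrank K L (hcard.trans hrank.symm)
  have := AdjoinRoot.isSplittingField_of_normal (f := biquadratic a b)
  let e : Gal(L/K) ≃* (biquadratic a b).Gal :=
    AlgEquiv.autCongr (IsSplittingField.algEquiv L (biquadratic a b))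
  have : IsCyclic Gal(L/K) := isCyclic_of_orderOf_eq_card σ (hσ.trans hcard.symm)
  exact ⟨isCyclic_of_surjective e e.surjective, (Nat.card_congr e.toEquiv).symm.trans hcard⟩

end Polynomial

namespace PadicInt

variable {p : ℕ} [Fact p.Prime]

lemma norm_lt_one_iff_toZMod_eq_zero (x : ℤ_[p]) : ‖x‖ < 1 ↔ toZMod x = 0 := by
  rw [← RingHom.mem_ker, ker_toZMod, IsLocalRing.mem_maximalIdeal, mem_nonunits]

lemma norm_eq_one_of_toZMod_ne_zero {x : ℤ_[p]} (hx : toZMod x ≠ 0) : ‖x‖ = 1 :=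
  (norm_le_one x).eq_of_not_lt ((norm_lt_one_iff_toZMod_eq_zero x).not.mpr hx)

theorem isSquare_of_isSquare_toZMod (hp : p ≠ 2) {u : ℤ_[p]} (hu : IsSquare (toZMod u))
    (hu0 : toZMod u ≠ 0) : IsSquare u := by
  obtain ⟨t, ht⟩ := hu
  set a : ℤ_[p] := (t.val : ℤ_[p])
  have ha : toZMod a = t := by simp [a]
  have h2a : toZMod (2 * a) ≠ 0 := by
    rw [map_mul, map_ofNat, ha]
    exact mul_ne_zero (Ring.two_ne_zero (by rwa [ZMod.ringChar_zmod_n])) (by rintro rfl; simp_all)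
  obtain ⟨z, hz, -⟩ := hensels_lemma (F := X ^ 2 - C u) (a := a) (by
    have hF : ‖aeval a (X ^ 2 - C u)‖ < 1 := by
      rw [norm_lt_one_iff_toZMod_eq_zero]
      simp [ha, ht, sq]
    have hF' : aeval a (derivative (X ^ 2 - C u)) = 2 * a := by simp [one_add_one_eq_two]
    rwa [hF', norm_eq_one_of_toZMod_ne_zero h2a, one_pow])
  exact ⟨z, by simpa [sub_eq_zero, sq, eq_comm] using hz⟩

theorem not_isSquare_coe_of_not_isSquare_toZMod {u : ℤ_[p]} (hu : ¬IsSquare (toZMod u)) :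
    ¬IsSquare (u : ℚ_[p]) := by
  rintro ⟨x, hx⟩
  have hx1 : ‖x‖ ≤ 1 := by
    have : ‖x‖ * ‖x‖ ≤ 1 := by rw [← norm_mul, ← hx]; exact u.norm_le_one
    nlinarith [norm_nonneg x]
  let z : ℤ_[p] := ⟨x, hx1⟩
  have hz : u = z * z := Subtype.coe_injective (by push_cast; exact hx)
  exact hu ⟨toZMod z, by rw [← map_mul, hz]⟩

end PadicInt

lemma not_isSquare_sq_mul {F : Type*} [Field F] {c x : F} (hc : c ≠ 0) (hx : ¬IsSquare x) :
    ¬IsSquare (c ^ 2 * x) :=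
  fun h => hx (by simpa [hc] using h.div (IsSquare.sq c))

lemma not_isSquare_padic_three_discr : ¬IsSquare ((-3 : ℚ_[3]) ^ 2 - 4 * 18) := by
  rw [show (-3 : ℚ_[3]) ^ 2 - 4 * 18 = 3 ^ 2 * ((-7 : ℤ) : ℤ_[3]) by
    rw [PadicInt.coe_intCast]; norm_num]
  exact not_isSquare_sq_mul three_ne_zero
    (PadicInt.not_isSquare_coe_of_not_isSquare_toZMod (by rw [map_intCast]; decide))

lemma not_isSquare_padic_three_eighteen : ¬IsSquare (18 : ℚ_[3]) := by
  rw [show (18 : ℚ_[3]) = 3 ^ 2 * ((2 : ℤ) : ℤ_[3]) by rw [PadicInt.coe_intCast]; norm_num]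
  exact not_isSquare_sq_mul three_ne_zero
    (PadicInt.not_isSquare_coe_of_not_isSquare_toZMod (by rw [map_intCast]; decide))

lemma isSquare_padic_three_eighteen_mul_discr :
    IsSquare ((18 : ℚ_[3]) * ((-3) ^ 2 - 4 * 18)) := by
  rw [show (18 : ℚ_[3]) * ((-3) ^ 2 - 4 * 18) = 9 ^ 2 * ((-14 : ℤ) : ℤ_[3]) by
    rw [PadicInt.coe_intCast]; norm_num]
  have h14 := PadicInt.isSquare_of_isSquare_toZMod (u := ((-14 : ℤ) : ℤ_[3])) (by norm_num)
    (by rw [map_intCast]; decide) (by rw [map_intCast]; decide)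
  exact (IsSquare.sq 9).mul (h14.map PadicInt.Coe.ringHom)

/-- The polynomial `x^4 - 3x^2 + 18` is irreducible over `ℚ_3`, and its Galois group over
`ℚ_3` is cyclic of order 4. -/
theorem quartic_over_Q3_irreducible_and_gal_C4 :
    Irreducible (X ^ 4 - 3 * X ^ 2 + 18 : ℚ_[3][X]) ∧
      IsCyclic (X ^ 4 - 3 * X ^ 2 + 18 : ℚ_[3][X]).Gal ∧
      Nat.card (X ^ 4 - 3 * X ^ 2 + 18 : ℚ_[3][X]).Gal = 4 := by
  have hf : (X ^ 4 - 3 * X ^ 2 + 18 : ℚ_[3][X]) = biquadratic (-3) 18 := by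
    simp only [biquadratic, C_neg, neg_mul, map_ofNat]
    ring
  have hirr := irreducible_biquadratic not_isSquare_padic_three_discr
    not_isSquare_padic_three_eighteen
  rw [hf]
  exact ⟨hirr, isCyclic_gal_biquadratic_and_card_eq_four (by norm_num) hirr
    isSquare_padic_three_eighteen_mul_discr⟩
end

section
/- The Galois group of the polynomial x^4 + 3x^3 - 6x^2 - 18x - 9 over ℚ is cyclic of order 4. -/
/-!
Let `α` be a root of `f = X⁴ + 3X³ - 6X² - 18X - 9`, which is irreducible since `f (X + 3)` is
Eisenstein at `5`. Over `ℚ(α)` the polynomial factors as `(X² - uX - u) (X² - vX - v)`, where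
`u = α + σ²α` and `v = σα + σ³α` are the roots of `Y² + 3Y - 9`, and both quadratic factors split
there. Hence `ℚ(α)` is the splitting field of `f` and its Galois group has order `4`. The
automorphism `σ : α ↦ (2α³ + 3α² - 18α - 18) / 3` sends `σα` to `-α³ - 2α² + 8α + 9 ≠ α`, so
`σ² ≠ 1` and `σ` generates the group.
-/

open Polynomial

theorem isCyclic_of_card_eq_prime_pow_of_pow_ne_one {G : Type*} [Group G] {p n : ℕ}
    [Fact p.Prime] (hcard : Nat.card G = p ^ (n + 1)) {g : G} (hg : g ^ p ^ n ≠ 1) :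
    IsCyclic G := by
  have : Finite G := Nat.finite_of_card_ne_zero (by simp [hcard, (Fact.out : p.Prime).ne_zero])
  refine isCyclic_of_orderOf_eq_card g ?_
  rw [hcard, orderOf_eq_prime_pow hg (hcard ▸ pow_card_eq_one')]

namespace AdjoinRoot

variable {K : Type*} [Field K] {f : K[X]}

theorem aeval_root_ne_zero_of_natDegree_lt {g : K[X]} (hg : g ≠ 0)
    (hlt : g.natDegree < f.natDegree) : aeval (root f) g ≠ 0 := by
  rw [aeval_eq, Ne, mk_eq_zero]
  exact fun hdvd ↦ hg (eq_zero_of_dvd_of_natDegree_lt hdvd hlt)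

variable [Fact (Irreducible f)]

instance inst_s16 : FiniteDimensional K (AdjoinRoot f) :=
  (powerBasis (Fact.out : Irreducible f).ne_zero).finite

theorem finrank_eq_natDegree : Module.finrank K (AdjoinRoot f) = f.natDegree := by
  rw [(powerBasis (Fact.out : Irreducible f).ne_zero).finrank, powerBasis_dim]

noncomputable def autOfRoot (x : AdjoinRoot f) (hx : aeval x f = 0) :
    AdjoinRoot f ≃ₐ[K] AdjoinRoot f :=
  AlgEquiv.ofBijective (liftAlgHom f (Algebra.ofId K _) x hx)
    (Algebra.IsAlgebraic.algHom_bijective _)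

@[simp]
theorem autOfRoot_root (x : AdjoinRoot f) (hx : aeval x f = 0) : autOfRoot x hx (root f) = x :=
  liftAlgHom_root f _ x hx

theorem isSplittingField_of_splits (h : (f.map (algebraMap K (AdjoinRoot f))).Splits) :
    IsSplittingField K (AdjoinRoot f) f := by
  refine ⟨h, ?_⟩
  rw [eq_top_iff, ← adjoinRoot_eq_top]
  refine Algebra.adjoin_mono (Set.singleton_subset_iff.mpr ?_)
  rw [mem_rootSet]
  exact ⟨(Fact.out : Irreducible f).ne_zero, by rw [aeval_eq, mk_self]⟩

noncomputable def autEquivGal (h : (f.map (algebraMap K (AdjoinRoot f))).Splits) :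
    (AdjoinRoot f ≃ₐ[K] AdjoinRoot f) ≃* f.Gal :=
  have := isSplittingField_of_splits h
  AlgEquiv.autCongr (IsSplittingField.algEquiv (AdjoinRoot f) f)

theorem card_gal_eq_natDegree (hsep : f.Separable)
    (h : (f.map (algebraMap K (AdjoinRoot f))).Splits) : Nat.card f.Gal = f.natDegree := by
  have := isSplittingField_of_splits h
  have : IsGalois K (AdjoinRoot f) := IsGalois.of_separable_splitting_field hsep
  rw [← Nat.card_congr (autEquivGal h).toEquiv, IsGalois.card_aut_eq_finrank,
    finrank_eq_natDegree]

end AdjoinRoot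

theorem splits_X_sq_sub_C_mul_X_sub_C {R : Type*} [CommRing R] {a b : R}
    (h : a * b = -(a + b)) : (X ^ 2 - C (a + b) * X - C (a + b)).Splits := by
  have hfactor : X ^ 2 - C (a + b) * X - C (a + b) = (X - C a) * (X - C b) := by
    rw [sub_eq_add_neg _ (C _), ← map_neg, ← h, map_add, map_mul]; ring
  rw [hfactor]
  exact (Splits.X_sub_C a).mul (Splits.X_sub_C b)

noncomputable abbrev quartic : ℚ[X] := X ^ 4 + 3 * X ^ 3 - 6 * X ^ 2 - 18 * X - 9

theorem natDegree_quartic : quartic.natDegree = 4 := by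
  unfold quartic; compute_degree!

theorem map_quartic_eq_of_add_of_mul {R : Type*} [CommRing R] [Algebra ℚ R] {u v : R}
    (hsum : u + v = -3) (hprod : u * v = -9) :
    quartic.map (algebraMap ℚ R) = (X ^ 2 - C u * X - C u) * (X ^ 2 - C v * X - C v) := by
  have hsum' : C u + C v = -3 := by rw [← map_add, hsum, map_neg, map_ofNat]
  have hprod' : C u * C v = -9 := by rw [← map_mul, hprod, map_neg, map_ofNat]
  simp only [Polynomial.map_sub, Polynomial.map_add, Polynomial.map_mul, Polynomial.map_pow,
    Polynomial.map_X, Polynomial.map_ofNat]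
  linear_combination (X ^ 3 + X ^ 2) * hsum' - (X ^ 2 + 2 * X + 1) * hprod'

/-- `quartic (X + 3)`, with integer coefficients. -/
noncomputable def quarticShift : ℤ[X] := X ^ 4 + 15 * X ^ 3 + 75 * X ^ 2 + 135 * X + 45

theorem monic_quarticShift : quarticShift.Monic := by
  unfold quarticShift; monicity!

theorem natDegree_quarticShift : quarticShift.natDegree = 4 := by
  unfold quarticShift; compute_degree!

theorem isEisensteinAt_five_quarticShift : quarticShift.IsEisensteinAt (Ideal.span {5}) := by
  refine ⟨?_, fun {n} hn ↦ ?_, ?_⟩ <;>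
    simp only [Ideal.span_singleton_pow, Ideal.mem_span_singleton,
      monic_quarticShift.leadingCoeff]
  · norm_num
  · rw [natDegree_quarticShift] at hn
    interval_cases n <;> simp [quarticShift, coeff_X]
  · simp [quarticShift]

theorem irreducible_quarticShift : Irreducible quarticShift :=
  isEisensteinAt_five_quarticShift.irreducible
    ((Ideal.span_singleton_prime (by norm_num)).mpr (by norm_num))
    monic_quarticShift.isPrimitive (by rw [natDegree_quarticShift]; norm_num)

theorem irreducible_quartic : Irreducible quartic := by
  have hshift : quartic = algEquivAevalXAddC (-3 : ℚ) (quarticShift.map (Int.castRingHom ℚ)) := by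
    simp only [quarticShift, Polynomial.map_add, Polynomial.map_pow, map_X, Polynomial.map_mul,
      Polynomial.map_ofNat, algEquivAevalXAddC_apply, map_neg, map_ofNat, map_add, map_pow,
      aeval_X, map_mul]
    ring
  rw [hshift]
  exact ((monic_quarticShift.irreducible_iff_irreducible_map_fraction_map (K := ℚ)).mp
    irreducible_quarticShift).map _

instance : Fact (Irreducible quartic) := ⟨irreducible_quartic⟩

namespace Quartic

local notation "L" => AdjoinRoot quartic
local notation "α" => AdjoinRoot.root quartic

-- `L` is a field of characteristic zero, so instance search would otherwise pick
-- `DivisionRing.toRatAlgebra`, which agrees with `AdjoinRoot.instAlgebra` only up to unfolding.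
noncomputable instance : Algebra ℚ L := AdjoinRoot.instAlgebra quartic

theorem aeval_quartic (x : L) :
    aeval x quartic = x ^ 4 + 3 * x ^ 3 - 6 * x ^ 2 - 18 * x - 9 := by
  simp only [map_add, map_sub, map_mul, map_pow, aeval_X, map_ofNat]

theorem root_quartic_eq_zero : α ^ 4 + 3 * α ^ 3 - 6 * α ^ 2 - 18 * α - 9 = 0 := by
  rw [← aeval_quartic, AdjoinRoot.aeval_eq, AdjoinRoot.mk_self]

-- The other roots of `quartic`: `σ α`, `σ² α` and `σ³ α` for the automorphism `σ` below.
noncomputable def conj₁ : L := 2 / 3 * α ^ 3 + α ^ 2 - 6 * α - 6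
noncomputable def conj₂ : L := -α ^ 3 - 2 * α ^ 2 + 8 * α + 9
noncomputable def conj₃ : L := 1 / 3 * α ^ 3 + α ^ 2 - 3 * α - 6

theorem root_mul_conj₂ : α * conj₂ = -(α + conj₂) := by
  rw [conj₂]; linear_combination -root_quartic_eq_zero

theorem conj₁_mul_conj₃ : conj₁ * conj₃ = -(conj₁ + conj₃) := by
  rw [conj₁, conj₃]
  linear_combination (-8 / 3 + 1 / 3 * α + 2 / 9 * α ^ 2) * root_quartic_eq_zero

theorem splits_map_quartic : (quartic.map (algebraMap ℚ L)).Splits := by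
  have hsum : (α + conj₂) + (conj₁ + conj₃) = -3 := by rw [conj₁, conj₂, conj₃]; ring
  have hprod : (α + conj₂) * (conj₁ + conj₃) = -9 := by
    rw [conj₁, conj₂, conj₃]; linear_combination (11 - α - α ^ 2) * root_quartic_eq_zero
  rw [map_quartic_eq_of_add_of_mul hsum hprod]
  exact (splits_X_sq_sub_C_mul_X_sub_C root_mul_conj₂).mul
    (splits_X_sq_sub_C_mul_X_sub_C conj₁_mul_conj₃)

theorem aeval_conj₁_quartic : aeval conj₁ quartic = 0 := by
  rw [aeval_quartic, conj₁]
  linear_combination (-59 - 206 * α - 356 / 3 * α ^ 2 + 95 * α ^ 3 + 389 / 9 * α ^ 4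
    - 40 / 3 * α ^ 5 - 136 / 27 * α ^ 6 + 16 / 27 * α ^ 7 + 16 / 81 * α ^ 8) * root_quartic_eq_zero

noncomputable def σ : L ≃ₐ[ℚ] L := AdjoinRoot.autOfRoot conj₁ aeval_conj₁_quartic

theorem σ_root : σ α = conj₁ := AdjoinRoot.autOfRoot_root _ _

theorem σ_conj₁ : σ conj₁ = conj₂ := by
  conv_lhs => rw [conj₁]
  simp only [map_add, map_sub, map_mul, map_pow, map_ofNat, map_div₀, σ_root]
  rw [conj₁, conj₂]
  linear_combination (29 / 3 + 158 / 9 * α - 34 / 9 * α ^ 2 - 100 / 27 * α ^ 3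
      + 8 / 27 * α ^ 4 + 16 / 81 * α ^ 5) * root_quartic_eq_zero

theorem conj₂_ne_root : conj₂ ≠ α := by
  have hcubic : aeval α (X ^ 3 + 2 * X ^ 2 - 7 * X - 9 : ℚ[X]) = α - conj₂ := by
    simp only [map_add, map_sub, map_mul, map_pow, aeval_X, map_ofNat]
    rw [conj₂]; ring
  have hdeg : (X ^ 3 + 2 * X ^ 2 - 7 * X - 9 : ℚ[X]).natDegree = 3 := by compute_degree!
  rw [ne_comm, ← sub_ne_zero, ← hcubic]
  exact AdjoinRoot.aeval_root_ne_zero_of_natDegree_lt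
    (ne_zero_of_natDegree_gt (n := 0) (by omega)) (by rw [hdeg, natDegree_quartic]; norm_num)

theorem σ_sq_ne_one : σ ^ 2 ≠ 1 := fun h ↦ conj₂_ne_root <| by
  rw [← σ_conj₁, ← σ_root]
  exact congr($h α)

end Quartic

/-- The Galois group of `x^4 + 3x^3 - 6x^2 - 18x - 9` over `ℚ` is cyclic of order 4. -/
theorem gal_of_quartic_over_Q_is_C4 :
    IsCyclic (X ^ 4 + 3 * X ^ 3 - 6 * X ^ 2 - 18 * X - 9 : ℚ[X]).Gal ∧
      Nat.card (X ^ 4 + 3 * X ^ 3 - 6 * X ^ 2 - 18 * X - 9 : ℚ[X]).Gal = 4 := by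
  have hcard : Nat.card quartic.Gal = 4 := by
    rw [AdjoinRoot.card_gal_eq_natDegree irreducible_quartic.separable
      Quartic.splits_map_quartic, natDegree_quartic]
  refine ⟨isCyclic_of_card_eq_prime_pow_of_pow_ne_one (p := 2) (n := 1) hcard
    (g := AdjoinRoot.autEquivGal Quartic.splits_map_quartic Quartic.σ) ?_, hcard⟩
  rw [pow_one, ← map_pow, map_ne_one_iff _ (MulEquiv.injective _)]
  exact Quartic.σ_sq_ne_one
end
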